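/- arXiv:2502.16728 — 5 statements merged into one kernel-verified Lean document; each statement's English description precedes it below -/
import Mathlib

section
/- Let n and m be integers with m odd, 3 ≤ m ≤ n, and let θ : {1,…,n} → ℝ be strictly positive. Define Ω_{ij} = θ_i θ_j / (1 + θ_i θ_j) for i ≠ j. Fix i1 ∈ {1,…,n} and let S = {1,…,n} \ {i1}. Then, summing over all tuples (i2, …, i_m) of pairwise distinct indices in S, ∑ Ω_{i1 i2}(1 − Ω_{i2 i3}) Ω_{i3 i4} ⋯ Ω_{i_{m-2} i_{m-1}} (1 − Ω_{i_{m-1} i_m}) Ω_{i_m i1} = θ_{i1}^2 · ∑ (1 − Ω_{i1 i2}) Ω_{i2 i3} (1 − Ω_{i3 i4}) ⋯ (1 − Ω_{i_{m-2} i_{m-1}}) Ω_{i_{m-1} i_m} (1 − Ω_{i_m i1}), where both sums are over the same set of distinct tuples and the factors alternate between Ω and 1 − Ω along the closed cycle i1 → i2 → ⋯ → i_m → i1, starting and ending with Ω in the first sum and with 1 − Ω in the second. -/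
/-!
Writing `N i j = (1 + θ i * θ j)⁻¹`, one has `Ω i j = θ i * θ j * N i j` and `1 - Ω i j = N i j`,
so the two summands attached to a cycle share the factor `∏ N` and differ only in the product of
`θ (g e) * θ (g (e + 1))` over the even, resp. odd, edges `e`. On a cycle of odd length `2k + 1`
the even edges `0, 2, …, 2k` meet every vertex once and the vertex `0` a second time, while the
odd edges meet every vertex except `0` exactly once; so the even product is `θ i1 ^ 2` times the
odd one.
-/

open Finset

namespace Fin

theorem mk_val_add_one_mod {n : ℕ} (e : Fin (n + 1)) :
    (⟨(e.val + 1) % (n + 1), Nat.mod_lt _ (Nat.succ_pos n)⟩ : Fin (n + 1)) = e + 1 := by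
  ext
  simp [val_add]

variable {k : ℕ}

theorem even_val_sub_one_iff (j : Fin (2 * k + 1)) : Even (j - 1).val ↔ j = 0 ∨ ¬Even j.val := by
  rw [coe_sub_one]
  split_ifs with hj
  · simp only [hj, true_or, iff_true]
    exact even_two_mul k
  · obtain ⟨i, hi⟩ := Nat.exists_eq_add_one_of_ne_zero (val_ne_zero_iff.mpr hj)
    rw [hi, Nat.add_sub_cancel, Nat.even_add_one]
    simp [hj]

theorem map_addRight_one_filter_even :
    (univ.filter fun e : Fin (2 * k + 1) => Even e.val).map (Equiv.addRight 1).toEmbedding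
      = insert 0 (univ.filter fun e => ¬Even e.val) := by
  ext j
  simp only [mem_map_equiv, Equiv.addRight_symm_apply, ← sub_eq_add_neg, mem_filter, mem_univ,
    true_and, mem_insert, even_val_sub_one_iff]

theorem map_addRight_one_filter_odd :
    (univ.filter fun e : Fin (2 * k + 1) => ¬Even e.val).map (Equiv.addRight 1).toEmbedding
      = (univ.filter fun e => Even e.val).erase 0 := by
  ext j
  simp only [mem_map_equiv, Equiv.addRight_symm_apply, ← sub_eq_add_neg, mem_filter, mem_univ,
    true_and, mem_erase, even_val_sub_one_iff]
  tauto

variable {M : Type*} [CommMonoid M]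

theorem prod_filter_even_mul_add_one (h : Fin (2 * k + 1) → M) :
    ∏ e with Even e.val, h e * h (e + 1) = h 0 * ∏ e, h e := by
  have shift := prod_map {e | Even e.val} (Equiv.addRight (1 : Fin (2 * k + 1))).toEmbedding h
  rw [map_addRight_one_filter_even, prod_insert (by simp)] at shift
  simp only [Equiv.coe_toEmbedding, Equiv.coe_addRight] at shift
  rw [prod_mul_distrib, ← shift, mul_left_comm, prod_filter_mul_prod_filter_not]

theorem mul_prod_filter_odd_mul_add_one (h : Fin (2 * k + 1) → M) :
    h 0 * ∏ e with ¬Even e.val, h e * h (e + 1) = ∏ e, h e := by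
  have shift := prod_map {e | ¬Even e.val} (Equiv.addRight (1 : Fin (2 * k + 1))).toEmbedding h
  rw [map_addRight_one_filter_odd] at shift
  simp only [Equiv.coe_toEmbedding, Equiv.coe_addRight] at shift
  rw [prod_mul_distrib, ← shift, mul_left_comm, mul_prod_erase _ _ (by simp), mul_comm,
    prod_filter_mul_prod_filter_not]

theorem prod_filter_even_mul_add_one_eq (h : Fin (2 * k + 1) → M) :
    ∏ e with Even e.val, h e * h (e + 1) = h 0 ^ 2 * ∏ e with ¬Even e.val, h e * h (e + 1) := by
  rw [prod_filter_even_mul_add_one, ← mul_prod_filter_odd_mul_add_one, pow_two, mul_assoc]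

end Fin

theorem prod_ite_div_one_add_self {ι 𝕜 : Type*} [Fintype ι] [Field 𝕜] (p : ι → Prop)
    [DecidablePred p] (x : ι → 𝕜) (hx : ∀ i, 1 + x i ≠ 0) :
    ∏ i, (if p i then x i / (1 + x i) else 1 - x i / (1 + x i))
      = (∏ i with p i, x i) * ∏ i, (1 + x i)⁻¹ := by
  rw [prod_filter, ← prod_mul_distrib]
  refine prod_congr rfl fun i _ => ?_
  split_ifs
  · rw [div_eq_mul_inv]
  · field_simp [hx i]
    ring

/-- Lemma 2, cancellation trick for the β-model.
For odd `m` with `3 ≤ m ≤ n`, strictly positive `θ`, and `Ω i j = θ i θ j / (1 + θ i θ j)`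
for `i ≠ j`, the alternating cycle sum starting/ending with `Ω` equals `θ i1 ^ 2` times the
alternating cycle sum starting/ending with `1 - Ω`, where both sums range over tuples
`(i2, …, i_m)` of pairwise distinct indices different from `i1` (encoded as injective maps
`g : Fin m → Fin n` with `g 0 = i1`, the cycle being `g 0 → g 1 → ⋯ → g (m-1) → g 0`). -/
theorem statement2 (n m : ℕ) (hm_odd : Odd m) (hm3 : 3 ≤ m)
    (θ : Fin n → ℝ) (hθ : ∀ i, 0 < θ i)
    (Ω : Fin n → Fin n → ℝ)
    (hΩ : ∀ i j, i ≠ j → Ω i j = θ i * θ j / (1 + θ i * θ j))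
    (i1 : Fin n) :
    ∑ g ∈ Finset.univ.filter
        (fun g : Fin m → Fin n => Function.Injective g ∧ g ⟨0, by omega⟩ = i1),
      ∏ e : Fin m,
        (if e.val % 2 = 0 then Ω (g e) (g ⟨(e.val + 1) % m, Nat.mod_lt _ (by omega)⟩)
         else 1 - Ω (g e) (g ⟨(e.val + 1) % m, Nat.mod_lt _ (by omega)⟩))
    = θ i1 ^ 2 *
      ∑ g ∈ Finset.univ.filter
          (fun g : Fin m → Fin n => Function.Injective g ∧ g ⟨0, by omega⟩ = i1),
        ∏ e : Fin m,
          (if e.val % 2 = 0 then 1 - Ω (g e) (g ⟨(e.val + 1) % m, Nat.mod_lt _ (by omega)⟩)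
           else Ω (g e) (g ⟨(e.val + 1) % m, Nat.mod_lt _ (by omega)⟩)) := by
  obtain ⟨k, rfl⟩ := hm_odd
  simp only [Fin.mk_val_add_one_mod, Fin.zero_eta, ← Nat.even_iff]
  rw [mul_sum]
  refine sum_congr rfl fun g hg => ?_
  obtain ⟨hg_inj, hg0⟩ := (mem_filter.mp hg).2
  have hne : ∀ e : Fin (2 * k + 1), g e ≠ g (e + 1) := fun e he => by
    have hloop := hg_inj he
    simp only [left_eq_add, Fin.one_eq_zero_iff] at hloop
    omega
  have hx : ∀ e : Fin (2 * k + 1), 1 + θ (g e) * θ (g (e + 1)) ≠ 0 := fun e => by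
    have := hθ (g e); have := hθ (g (e + 1)); positivity
  have hodd := prod_ite_div_one_add_self (fun e : Fin (2 * k + 1) => ¬Even e.val) _ hx
  simp only [ite_not] at hodd
  simp only [hΩ _ _ (hne _), prod_ite_div_one_add_self _ _ hx, hodd,
    Fin.prod_filter_even_mul_add_one_eq fun e => θ (g e), hg0]
  ring
end

section
/- Let S be a finite set, let i be an element not in S, let θ be a strictly positive real-valued function on S ∪ {i}, and let p > 0. Define Ω_{ij} = p θ_i θ_j / (1 + p θ_i θ_j) for j ∈ S (and set Ω_{ji} = Ω_{ij}), and Ω_{jt} = θ_j θ_t / (1 + θ_j θ_t) for distinct j, t ∈ S. Then ∑_{j ≠ t ∈ S} Ω_{ij}(1 − Ω_{jt}) Ω_{ti} = θ_i^2 p^2 · ∑_{j ≠ t ∈ S} (1 − Ω_{ij}) Ω_{jt} (1 − Ω_{ti}). -/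
/-!
Write `σ x = x / (1 + x)`. The odds identity `σ x = x (1 - σ x)` turns each factor `Ω` of the
cycle into its odds times `1 - Ω`, so both summands become the common product
`(1 - Ω_{ij})(1 - Ω_{jt})(1 - Ω_{ti})` times the product of the relevant odds. These odds are
`(p θ_i θ_j)(p θ_t θ_i)` on the left and `θ_j θ_t` on the right, which differ by exactly
`θ_i² p²`; the identity therefore holds summand by summand.
-/

theorem div_one_add_eq_mul_one_sub_div {x : ℝ} (hx : 1 + x ≠ 0) :
    x / (1 + x) = x * (1 - x / (1 + x)) := by
  field_simp
  ring

theorem div_one_add_cycle_eq_mul {a b c k : ℝ} (ha : 1 + a ≠ 0) (hb : 1 + b ≠ 0)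
    (hc : 1 + c ≠ 0) (habc : a * c = k * b) :
    a / (1 + a) * (1 - b / (1 + b)) * (c / (1 + c))
      = k * ((1 - a / (1 + a)) * (b / (1 + b)) * (1 - c / (1 + c))) := by
  have odds_a := div_one_add_eq_mul_one_sub_div ha
  have odds_b := div_one_add_eq_mul_one_sub_div hb
  have odds_c := div_one_add_eq_mul_one_sub_div hc
  set A := a / (1 + a)
  set B := b / (1 + b)
  set C := c / (1 + c)
  linear_combination (1 - B) * C * odds_a + a * (1 - A) * (1 - B) * odds_c
    - k * (1 - A) * (1 - C) * odds_b + (1 - A) * (1 - B) * (1 - C) * habc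

theorem statement3_general {α : Type*} [DecidableEq α] (S : Finset α) (i : α)
    (θ : α → ℝ) (hθ : ∀ j ∈ insert i S, 0 < θ j) (p : ℝ) (hp : 0 < p) :
    ∑ j ∈ S, ∑ t ∈ S.erase j,
        (p * θ i * θ j / (1 + p * θ i * θ j)) *
          (1 - θ j * θ t / (1 + θ j * θ t)) *
            (p * θ t * θ i / (1 + p * θ t * θ i))
      = θ i ^ 2 * p ^ 2 *
        ∑ j ∈ S, ∑ t ∈ S.erase j,
          (1 - p * θ i * θ j / (1 + p * θ i * θ j)) *
            (θ j * θ t / (1 + θ j * θ t)) *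
              (1 - p * θ t * θ i / (1 + p * θ t * θ i)) := by
  rw [Finset.mul_sum]
  refine Finset.sum_congr rfl fun j hj => ?_
  rw [Finset.mul_sum]
  refine Finset.sum_congr rfl fun t ht => ?_
  have hθi := hθ i (Finset.mem_insert_self i S)
  have hθj := hθ j (Finset.mem_insert_of_mem hj)
  have hθt := hθ t (Finset.mem_insert_of_mem (Finset.mem_of_mem_erase ht))
  exact div_one_add_cycle_eq_mul (by positivity) (by positivity) (by positivity) (by ring)

/-- cross-community cycle identity.
Let `S` be a finite set, `i ∉ S`, `θ` strictly positive on `S ∪ {i}` and `p > 0`.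
With `Ω_{ij} = p θ_i θ_j / (1 + p θ_i θ_j)` for `j ∈ S` (symmetric) and
`Ω_{jt} = θ_j θ_t / (1 + θ_j θ_t)` for distinct `j, t ∈ S`, the alternating 3-cycle
sums satisfy `∑ Ω_{ij}(1 − Ω_{jt})Ω_{ti} = θ_i² p² ∑ (1 − Ω_{ij})Ω_{jt}(1 − Ω_{ti})`,
both sums taken over ordered pairs of distinct `j, t ∈ S`. -/
theorem statement3 {α : Type*} [DecidableEq α] (S : Finset α) (i : α) (hi : i ∉ S)
    (θ : α → ℝ) (hθ : ∀ j ∈ insert i S, 0 < θ j) (p : ℝ) (hp : 0 < p) :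
    ∑ j ∈ S, ∑ t ∈ S.erase j,
        (p * θ i * θ j / (1 + p * θ i * θ j)) *
          (1 - θ j * θ t / (1 + θ j * θ t)) *
            (p * θ t * θ i / (1 + p * θ t * θ i))
      = θ i ^ 2 * p ^ 2 *
        ∑ j ∈ S, ∑ t ∈ S.erase j,
          (1 - p * θ i * θ j / (1 + p * θ i * θ j)) *
            (θ j * θ t / (1 + θ j * θ t)) *
              (1 - p * θ t * θ i / (1 + p * θ t * θ i)) :=
  statement3_general S i θ hθ p hp
end

section
/- Let K ≥ 2, n ≥ 1, c0 > 0, α > 0. Let π : {1,…,n} → {1,…,K} be a labeling with each label class of size at least α n, and let r_1, …, r_K ∈ ℝ^{K−1} be pairwise at Euclidean distance at least √2 · c0. Let R ∈ ℝ^{n×(K−1)} be the matrix whose i-th row is r_{π(i)}. Let R̂ ∈ ℝ^{n×(K−1)} satisfy ‖R̂ − R‖_F^2 < α n c0^2 / 160. Let M ∈ ℝ^{n×(K−1)} be any matrix having at most K distinct rows with ‖R̂ − M‖_F ≤ ‖R̂ − R‖_F (as is satisfied by the rows-of-cluster-centers matrix of an optimal K-means solution applied to the rows of R̂). Then there exists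 an injective map ℓ from the set of distinct rows of M to {1, …, K} such that #{ i : ℓ(m_i) ≠ π(i) } ≤ (160 / c0^2) · ‖R̂ − R‖_F^2, where m_i denotes the i-th row of M. -/
/-!
Put `s = √2 c0 / 2`, so that the centers `r k` are `2s`-separated and the balls of radius `s`
around them are disjoint. A node `i` whose row `M i` is at distance at least `s` from its
true center costs at least `s² / 2 = c0² / 4` in `‖R̂ − M‖² + ‖R̂ − R‖²`, a quantity bounded
by `2‖R̂ − R‖²`; so there are at most `8‖R̂ − R‖² / c0²` such far nodes. A whole community
cannot consist of far nodes, hence every ball contains a row of `M`. Having at most `K`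
distinct rows, `M` then has exactly one distinct row in each ball, which labels the rows
injectively, and every misclassified node is far.
-/

open Finset

section Separated

variable {X ι : Type*} [PseudoMetricSpace X] {r : ι → X} {s : ℝ}

lemma le_dist_of_dist_lt_of_separated (hsep : ∀ k l, k ≠ l → 2 * s ≤ dist (r k) (r l))
    {x : X} {k l : ι} (hx : dist x (r k) < s) (hkl : k ≠ l) : s ≤ dist x (r l) := by
  have := dist_triangle_left (r k) (r l) x
  linarith [hsep k l hkl]

lemma eq_of_dist_lt_of_separated (hsep : ∀ k l, k ≠ l → 2 * s ≤ dist (r k) (r l))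
    {x : X} {k l : ι} (hk : dist x (r k) < s) (hl : dist x (r l) < s) : k = l := by
  by_contra hkl
  exact (le_dist_of_dist_lt_of_separated hsep hk hkl).not_gt hl

lemma exists_injOn_label_of_separated [Fintype ι] [Nonempty ι] {κ : Type*} [Finite κ]
    {M : κ → X} (hsep : ∀ k l, k ≠ l → 2 * s ≤ dist (r k) (r l))
    (hrows : (Set.range M).ncard ≤ Fintype.card ι) (hcover : ∀ k, ∃ i, dist (M i) (r k) < s) :
    ∃ ℓ : X → ι, Set.InjOn ℓ (Set.range M) ∧ ∀ i, dist (M i) (r (ℓ (M i))) < s := by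
  choose idx hidx using hcover
  set m : ι → X := fun k ↦ M (idx k)
  have hm_inj : Function.Injective m := fun k l hkl ↦
    eq_of_dist_lt_of_separated (x := m k) hsep (hidx k) (by rw [hkl]; exact hidx l)
  have hrange : Set.range m = Set.range M := by
    refine Set.eq_of_subset_of_ncard_le (Set.range_comp_subset_range idx M) ?_ (Set.finite_range M)
    rwa [Set.ncard_range_of_injective hm_inj, Nat.card_eq_fintype_card]
  have hleft : Function.LeftInverse (Function.invFun m) m := Function.leftInverse_invFun hm_inj
  refine ⟨Function.invFun m, ?_, fun i ↦ ?_⟩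
  · rw [← hrange]
    rintro _ ⟨k, rfl⟩ _ ⟨l, rfl⟩ hkl
    rw [hleft k, hleft l] at hkl
    rw [hkl]
  · obtain ⟨k, hk⟩ : M i ∈ Set.range m := hrange ▸ Set.mem_range_self i
    rw [← hk, hleft k]
    exact hidx k

end Separated

lemma ncard_setOf_le_mul_le_sum {ι : Type*} [Fintype ι] {f : ι → ℝ} (hf : ∀ i, 0 ≤ f i) (t : ℝ) :
    ({i | t ≤ f i}.ncard : ℝ) * t ≤ ∑ i, f i := by
  rw [Set.ncard_eq_toFinset_card', Set.toFinset_ofPred, ← nsmul_eq_mul]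
  calc #{i | t ≤ f i} • t ≤ ∑ i with t ≤ f i, f i :=
        card_nsmul_le_sum _ _ _ fun i hi ↦ (mem_filter.1 hi).2
    _ ≤ ∑ i, f i := sum_le_sum_of_subset_of_nonneg (filter_subset _ _) fun i _ _ ↦ hf i

lemma ncard_le_dist_mul_sq_le {ι X : Type*} [Fintype ι] [PseudoMetricSpace X] (Rhat M R : ι → X)
    {s : ℝ} (hs : 0 ≤ s) :
    ({i | s ≤ dist (M i) (R i)}.ncard : ℝ) * s ^ 2
      ≤ 2 * ∑ i, (dist (Rhat i) (M i) ^ 2 + dist (Rhat i) (R i) ^ 2) := by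
  have hsub : {i | s ≤ dist (M i) (R i)}
      ⊆ {i | s ^ 2 ≤ 2 * (dist (Rhat i) (M i) ^ 2 + dist (Rhat i) (R i) ^ 2)} := by
    intro i (hi : s ≤ dist (M i) (R i))
    calc s ^ 2 ≤ (dist (Rhat i) (M i) + dist (Rhat i) (R i)) ^ 2 :=
          pow_le_pow_left₀ hs (hi.trans (dist_triangle_left _ _ _)) 2
      _ ≤ _ := add_sq_le
  rw [mul_sum]
  exact (mul_le_mul_of_nonneg_right (Nat.cast_le.2 (Set.ncard_le_ncard hsub)) (sq_nonneg s)).trans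
    (ncard_setOf_le_mul_le_sum (fun i ↦ by positivity) _)

theorem statement7_general (K n : ℕ)
    (c0 : ℝ) (hc0 : 0 < c0) (α : ℝ)
    (π : Fin n → Fin K)
    (hsize : ∀ k : Fin K, α * n ≤ (Set.ncard {i : Fin n | π i = k} : ℝ))
    (r : Fin K → EuclideanSpace ℝ (Fin (K - 1)))
    (hsep : ∀ k l : Fin K, k ≠ l → Real.sqrt 2 * c0 ≤ dist (r k) (r l))
    (Rhat : Fin n → EuclideanSpace ℝ (Fin (K - 1)))
    (hclose : ∑ i, dist (Rhat i) (r (π i)) ^ 2 < α * n * c0 ^ 2 / 160)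
    (M : Fin n → EuclideanSpace ℝ (Fin (K - 1)))
    (hMrows : (Set.range M).ncard ≤ K)
    (hfit : ∑ i, dist (Rhat i) (M i) ^ 2 ≤ ∑ i, dist (Rhat i) (r (π i)) ^ 2) :
    ∃ ℓ : EuclideanSpace ℝ (Fin (K - 1)) → Fin K,
      Set.InjOn ℓ (Set.range M) ∧
      (Set.ncard {i : Fin n | ℓ (M i) ≠ π i} : ℝ)
        ≤ 160 / c0 ^ 2 * ∑ i, dist (Rhat i) (r (π i)) ^ 2 := by
  have hn : 0 < n := Nat.pos_of_ne_zero (by rintro rfl; simp at hclose)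
  have : Nonempty (Fin K) := ⟨π ⟨0, hn⟩⟩
  set E := ∑ i, dist (Rhat i) (r (π i)) ^ 2
  have hE : 0 ≤ E := sum_nonneg fun i _ ↦ sq_nonneg _
  set s := Real.sqrt 2 * c0 / 2
  have hsep' : ∀ k l, k ≠ l → 2 * s ≤ dist (r k) (r l) := fun k l hkl ↦
    (mul_div_cancel₀ _ two_ne_zero).trans_le (hsep k l hkl)
  set far := {i | s ≤ dist (M i) (r (π i))}
  have hfar : (far.ncard : ℝ) * c0 ^ 2 ≤ 8 * E := by
    have h := ncard_le_dist_mul_sq_le Rhat M (fun i ↦ r (π i)) (by positivity : 0 ≤ s)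
    rw [sum_add_distrib, div_pow, mul_pow, Real.sq_sqrt zero_le_two] at h
    linarith
  have hcover : ∀ k, ∃ i, dist (M i) (r k) < s := by
    intro k
    by_contra! hk
    have hsub : {i | π i = k} ⊆ far := fun i (hi : π i = k) ↦ by simpa [far, hi] using hk i
    have := mul_le_mul_of_nonneg_right
      ((hsize k).trans (Nat.cast_le.2 (Set.ncard_le_ncard hsub))) (sq_nonneg c0)
    linarith
  obtain ⟨ℓ, hinj, hnear⟩ := exists_injOn_label_of_separated hsep'
    (by rwa [Fintype.card_fin]) hcover
  refine ⟨ℓ, hinj, ?_⟩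
  have hbad : {i | ℓ (M i) ≠ π i} ⊆ far := fun i hi ↦
    le_dist_of_dist_lt_of_separated hsep' (hnear i) hi
  have := mul_le_mul_of_nonneg_right (Nat.cast_le (α := ℝ).2 (Set.ncard_le_ncard hbad))
    (sq_nonneg c0)
  rw [div_mul_eq_mul_div, le_div_iff₀ (by positivity)]
  linarith

/-- deterministic k-means / Hamming-error lemma.
If the population SCORE matrix `R` has rows `r (π i)` with the `K` centers `r k` pairwise
at distance at least `√2 · c0`, every community has at least `α n` nodes,
`‖R̂ − R‖_F² < α n c0²/160`, and `M` is any matrix with at most `K` distinct rows fitting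
`R̂` at least as well as `R` does, then there is an injective labeling `ℓ` of the distinct
rows of `M` by `{1,…,K}` misclassifying at most `(160/c0²)·‖R̂ − R‖_F²` nodes. -/
theorem statement7 (K n : ℕ) (hK : 2 ≤ K) (hn : 1 ≤ n)
    (c0 : ℝ) (hc0 : 0 < c0) (α : ℝ) (hα : 0 < α)
    (π : Fin n → Fin K)
    (hsize : ∀ k : Fin K, α * n ≤ (Set.ncard {i : Fin n | π i = k} : ℝ))
    (r : Fin K → EuclideanSpace ℝ (Fin (K - 1)))
    (hsep : ∀ k l : Fin K, k ≠ l → Real.sqrt 2 * c0 ≤ dist (r k) (r l))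
    (Rhat : Fin n → EuclideanSpace ℝ (Fin (K - 1)))
    (hclose : ∑ i, dist (Rhat i) (r (π i)) ^ 2 < α * n * c0 ^ 2 / 160)
    (M : Fin n → EuclideanSpace ℝ (Fin (K - 1)))
    (hMrows : (Set.range M).ncard ≤ K)
    (hfit : ∑ i, dist (Rhat i) (M i) ^ 2 ≤ ∑ i, dist (Rhat i) (r (π i)) ^ 2) :
    ∃ ℓ : EuclideanSpace ℝ (Fin (K - 1)) → Fin K,
      Set.InjOn ℓ (Set.range M) ∧
      (Set.ncard {i : Fin n | ℓ (M i) ≠ π i} : ℝ)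
        ≤ 160 / c0 ^ 2 * ∑ i, dist (Rhat i) (r (π i)) ^ 2 :=
  statement7_general K n c0 hc0 α π hsize r hsep Rhat hclose M hMrows hfit
end

section
/- Let W ∈ ℝ^{n×n}, P ∈ ℝ^{K×K}, and let Π, Π̂ ∈ ℝ^{n×K} be membership matrices, i.e., every row of Π and of Π̂ is a standard basis vector of ℝ^K; write π_i and π̂_i for the i-th rows. Then ‖W ∘ ((Π̂ − Π) P Π̂')‖_F ≤ 2 ‖P‖_max · (max_{1≤i≤n} ‖e_i' W‖₂) · √(#{ i : π̂_i ≠ π_i }), where ∘ is the entrywise product, ‖P‖_max = max_{k,ℓ} |P_{kℓ}|, ‖·‖_F is the Frobenius norm, and e_i' W is the i-th row of W. -/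
/-!
The `(i, j)` entry of `(Π̂ - Π) P Π̂ᵀ` is `P (π̂ i) (π̂ j) - P (π i) (π̂ j)`: it vanishes on the rows
with `π̂ i = π i` and is at most `2 ‖P‖_max` in absolute value elsewhere. Hence each misclassified
row contributes at most `(2 ‖P‖_max ‖eᵢᵀ W‖₂)²` to the squared Frobenius norm, and the other rows
contribute nothing.
-/

open Matrix Finset

theorem Finset.sum_sq_mul_le_of_abs_le {α : Type*} (s : Finset α) {w a : α → ℝ} {c : ℝ}
    (ha : ∀ j ∈ s, |a j| ≤ c) : ∑ j ∈ s, (w j * a j) ^ 2 ≤ c ^ 2 * ∑ j ∈ s, w j ^ 2 := by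
  rw [mul_sum]
  refine sum_le_sum fun j hj => ?_
  rw [mul_pow, mul_comm (c ^ 2)]
  exact mul_le_mul_of_nonneg_left (sq_le_sq' (abs_le.1 (ha j hj)).1 (abs_le.1 (ha j hj)).2)
    (sq_nonneg _)

namespace Matrix

variable {ι κ ν : Type*}

def membership (R : Type*) [Zero R] [One R] [DecidableEq κ] (π : ι → κ) : Matrix ι κ R :=
  of fun i k => if π i = k then 1 else 0

theorem membership_mul_mul_transpose_membership_apply {R : Type*} [NonAssocSemiring R]
    [Fintype κ] [DecidableEq κ] (π : ι → κ) (σ : ν → κ) (P : Matrix κ κ R) (i : ι) (j : ν) :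
    (membership R π * P * (membership R σ)ᵀ) i j = P (π i) (σ j) := by
  simp [membership, mul_apply, ite_mul, mul_ite]

theorem abs_le_iSup_iSup_abs [Finite ι] [Finite κ] (A : Matrix ι κ ℝ) (i : ι) (k : κ) :
    |A i k| ≤ ⨆ i, ⨆ k, |A i k| :=
  (le_ciSup (Set.finite_range _).bddAbove k).trans
    (le_ciSup (f := fun i => ⨆ k, |A i k|) (Set.finite_range _).bddAbove i)

theorem sqrt_sum_sq_hadamard_le [Fintype ι] [Fintype κ] {W A : Matrix ι κ ℝ}
    {T : Finset ι} {c r : ℝ} (hc : 0 ≤ c) (hr : 0 ≤ r)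
    (hA_zero : ∀ i ∉ T, ∀ j, A i j = 0) (hA : ∀ i j, |A i j| ≤ c)
    (hW : ∀ i, √(∑ j, W i j ^ 2) ≤ r) :
    √(∑ i, ∑ j, (W i j * A i j) ^ 2) ≤ c * r * √(#T) := by
  have hrow : ∀ i, ∑ j, (W i j * A i j) ^ 2 ≤ (c * r) ^ 2 := fun i =>
    calc ∑ j, (W i j * A i j) ^ 2 ≤ c ^ 2 * ∑ j, W i j ^ 2 :=
          univ.sum_sq_mul_le_of_abs_le fun j _ => hA i j
      _ ≤ c ^ 2 * r ^ 2 := by gcongr; exact (Real.sqrt_le_left hr).1 (hW i)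
      _ = (c * r) ^ 2 := by ring
  have hsum : ∑ i, ∑ j, (W i j * A i j) ^ 2 ≤ (c * r) ^ 2 * #T :=
    calc ∑ i, ∑ j, (W i j * A i j) ^ 2 = ∑ i ∈ T, ∑ j, (W i j * A i j) ^ 2 :=
          (sum_subset (subset_univ T) fun i _ hi => by simp [hA_zero i hi]).symm
      _ ≤ ∑ _i ∈ T, (c * r) ^ 2 := sum_le_sum fun i _ => hrow i
      _ = (c * r) ^ 2 * #T := by rw [sum_const, nsmul_eq_mul, mul_comm]
  calc √(∑ i, ∑ j, (W i j * A i j) ^ 2) ≤ √((c * r) ^ 2 * #T) := Real.sqrt_le_sqrt hsum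
    _ = c * r * √(#T) := by rw [Real.sqrt_mul (sq_nonneg _), Real.sqrt_sq (by positivity)]

end Matrix

/-- misclassification bound for Hadamard-perturbed noise.
For membership matrices `Pm, Pmhat` (rows are standard basis vectors, encoded by the
labelings `π, π̂`), one has
`‖W ∘ ((Π̂ − Π) P Π̂ᵀ)‖_F ≤ 2 ‖P‖_max (max_i ‖eᵢᵀW‖₂) √(#{i : π̂ i ≠ π i})`. -/
theorem statement13 (n K : ℕ)
    (W : Matrix (Fin n) (Fin n) ℝ) (P : Matrix (Fin K) (Fin K) ℝ)
    (π πhat : Fin n → Fin K)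
    (Pm Pmhat : Matrix (Fin n) (Fin K) ℝ)
    (hPm : Pm = Matrix.of fun i k => if π i = k then (1 : ℝ) else 0)
    (hPmhat : Pmhat = Matrix.of fun i k => if πhat i = k then (1 : ℝ) else 0) :
    Real.sqrt (∑ i, ∑ j, (W i j * ((Pmhat - Pm) * P * Pmhatᵀ) i j) ^ 2)
      ≤ 2 * (⨆ k, ⨆ l, |P k l|) * (⨆ i, Real.sqrt (∑ j, W i j ^ 2)) *
          Real.sqrt (Set.ncard {i : Fin n | πhat i ≠ π i}) := by
  obtain rfl : Pm = membership ℝ π := hPm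
  obtain rfl : Pmhat = membership ℝ πhat := hPmhat
  have hentry i j : ((membership ℝ πhat - membership ℝ π) * P * (membership ℝ πhat)ᵀ) i j
      = P (πhat i) (πhat j) - P (π i) (πhat j) := by
    rw [Matrix.sub_mul, Matrix.sub_mul, Matrix.sub_apply,
      membership_mul_mul_transpose_membership_apply, membership_mul_mul_transpose_membership_apply]
  rw [← coe_filter_univ, Set.ncard_coe_finset]
  refine sqrt_sum_sq_hadamard_le
    (mul_nonneg zero_le_two (Real.iSup_nonneg fun _ => Real.iSup_nonneg fun _ => abs_nonneg _))
    (Real.iSup_nonneg fun _ => Real.sqrt_nonneg _) ?_ ?_ ?_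
  · intro i hi j
    simp only [mem_filter, mem_univ, true_and, not_not] at hi
    rw [hentry, hi, sub_self]
  · intro i j
    rw [hentry, two_mul]
    exact (abs_sub _ _).trans
      (add_le_add (P.abs_le_iSup_iSup_abs _ _) (P.abs_le_iSup_iSup_abs _ _))
  · exact le_ciSup (Set.finite_range _).bddAbove
end

section
/- Let A be a real n × n matrix with all entries in [0, 1], let i ∈ {1,…,n}, and let S and Ŝ be subsets of {1,…,n} \ {i}. Then | ∑_{j ≠ t, j,t ∈ Ŝ} A_{ij}(1 − A_{jt}) A_{ti} − ∑_{j ≠ t, j,t ∈ S} A_{ij}(1 − A_{jt}) A_{ti} | ≤ 2 · (∑_{j ≠ i} A_{ij}) · |S △ Ŝ|, where S △ Ŝ denotes the symmetric difference of the two index sets and both sums are over ordered pairs of distinct indices. -/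
/-!
Both counts are sums of the nonnegative weight `A i j (1 - A j t) A t i` over ordered pairs of
distinct indices, so their difference is at most the total weight of the pairs lying in only one of
the two pair sets. Such a pair has a coordinate in `S ∆ Ŝ`, the other one in `S ∪ Ŝ ⊆ [n] \ {i}`.
Since all entries lie in `[0, 1]`, the weight is at most `A i j` and at most `A t i = A i t`, so for
each of the `|S ∆ Ŝ|` choices of that coordinate, each of the two positions contributes at most
the row sum of `A` at `i`.
-/

open scoped symmDiff
open Finset

namespace Finset

variable {ι : Type*} [DecidableEq ι]

theorem sum_sum_erase_eq_sum_offDiag {M : Type*} [AddCommMonoid M] (s : Finset ι)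
    (f : ι → ι → M) :
    ∑ j ∈ s, ∑ k ∈ s.erase j, f j k = ∑ p ∈ s.offDiag, f p.1 p.2 :=
  (sum_finset_product' _ _ _ fun p => by rw [mem_offDiag, mem_erase]; tauto).symm

theorem abs_sum_sub_sum_le_sum_symmDiff {f : ι → ℝ} (hf : ∀ x, 0 ≤ f x) (s t : Finset ι) :
    |∑ x ∈ s, f x - ∑ x ∈ t, f x| ≤ ∑ x ∈ s ∆ t, f x := by
  rw [← sum_sdiff_sub_sum_sdiff, symmDiff_def, sup_eq_union, sum_union disjoint_sdiff_sdiff]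
  have hst := sum_nonneg fun x (_ : x ∈ s \ t) => hf x
  have hts := sum_nonneg fun x (_ : x ∈ t \ s) => hf x
  exact abs_sub_le_iff.2 ⟨by linarith, by linarith⟩

theorem sum_union_le_sum_add_sum {f : ι → ℝ} (hf : ∀ x, 0 ≤ f x) (s t : Finset ι) :
    ∑ x ∈ s ∪ t, f x ≤ ∑ x ∈ s, f x + ∑ x ∈ t, f x := by
  rw [← sum_union_inter]
  exact le_add_of_nonneg_right (sum_nonneg fun x _ => hf x)

theorem offDiag_symmDiff_offDiag_subset (s t : Finset ι) :
    s.offDiag ∆ t.offDiag ⊆ (s ∆ t) ×ˢ (s ∪ t) ∪ (s ∪ t) ×ˢ (s ∆ t) := by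
  intro p hp
  simp only [mem_symmDiff, mem_offDiag, mem_union, mem_product] at hp ⊢
  tauto

theorem abs_sum_offDiag_sub_sum_offDiag_le {f : ι → ι → ℝ} (hf : ∀ j k, 0 ≤ f j k)
    (s t : Finset ι) :
    |∑ p ∈ s.offDiag, f p.1 p.2 - ∑ p ∈ t.offDiag, f p.1 p.2|
      ≤ ∑ j ∈ s ∆ t, ∑ k ∈ s ∪ t, (f j k + f k j) := by
  let g : ι × ι → ℝ := fun p => f p.1 p.2
  have hg : ∀ p, 0 ≤ g p := fun p => hf p.1 p.2
  calc _ ≤ ∑ p ∈ s.offDiag ∆ t.offDiag, g p := abs_sum_sub_sum_le_sum_symmDiff hg _ _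
    _ ≤ ∑ p ∈ (s ∆ t) ×ˢ (s ∪ t) ∪ (s ∪ t) ×ˢ (s ∆ t), g p :=
        sum_le_sum_of_subset_of_nonneg (offDiag_symmDiff_offDiag_subset s t) fun p _ _ => hg p
    _ ≤ ∑ p ∈ (s ∆ t) ×ˢ (s ∪ t), g p + ∑ p ∈ (s ∪ t) ×ˢ (s ∆ t), g p :=
        sum_union_le_sum_add_sum hg _ _
    _ = _ := by
        rw [sum_product, sum_product_right, ← sum_add_distrib]
        simp only [g, sum_add_distrib]

end Finset

theorem mul_one_sub_mul_mem_Icc {x y z : ℝ} (hx : x ∈ Set.Icc (0 : ℝ) 1)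
    (hy : y ∈ Set.Icc (0 : ℝ) 1) (hz : z ∈ Set.Icc (0 : ℝ) 1) :
    0 ≤ x * (1 - y) * z ∧ x * (1 - y) * z ≤ x ∧ x * (1 - y) * z ≤ z := by
  obtain ⟨hx0, hx1⟩ := hx
  obtain ⟨hy0, hy1⟩ := hy
  obtain ⟨hz0, hz1⟩ := hz
  have h1y : 0 ≤ 1 - y := by linarith
  have hxy : x * (1 - y) ≤ x := by nlinarith
  refine ⟨by positivity, ?_, ?_⟩ <;> nlinarith [mul_nonneg hx0 h1y]

/-- stability of the alternating 3-cycle count.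
For a symmetric adjacency-type matrix `A` with entries in `[0,1]`, a node `i`, and index
sets `S, Ŝ ⊆ {1,…,n} \ {i}`, replacing `S` by `Ŝ` in the alternating 3-cycle count
centered at `i` changes it by at most `2 (∑_{j ≠ i} A_{ij}) |S △ Ŝ|`.
(Symmetry of `A` is part of the adjacency-matrix context.) -/
theorem statement14 (n : ℕ) (A : Matrix (Fin n) (Fin n) ℝ)
    (hA : A.IsSymm)
    (hA01 : ∀ i j, A i j ∈ Set.Icc (0 : ℝ) 1)
    (i : Fin n) (S Shat : Finset (Fin n)) (hiS : i ∉ S) (hiShat : i ∉ Shat) :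
    |(∑ j ∈ Shat, ∑ t ∈ Shat.erase j, A i j * (1 - A j t) * A t i)
        - ∑ j ∈ S, ∑ t ∈ S.erase j, A i j * (1 - A j t) * A t i|
      ≤ 2 * (∑ j ∈ Finset.univ.erase i, A i j) * ((S ∆ Shat).card : ℝ) := by
  have hentry j k := mul_one_sub_mul_mem_Icc (hA01 i j) (hA01 j k) (hA01 k i)
  have hsub : Shat ∪ S ⊆ univ.erase i :=
    subset_erase.2 ⟨subset_univ _, by simp [hiS, hiShat]⟩
  simp only [sum_sum_erase_eq_sum_offDiag]
  calc _ ≤ ∑ j ∈ Shat ∆ S, ∑ k ∈ Shat ∪ S,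
          (A i j * (1 - A j k) * A k i + A i k * (1 - A k j) * A j i) :=
        abs_sum_offDiag_sub_sum_offDiag_le (fun j k => (hentry j k).1) _ _
    _ ≤ ∑ j ∈ Shat ∆ S, ∑ k ∈ univ.erase i, (A i k + A i k) := by
        refine sum_le_sum fun j _ => le_trans (sum_le_sum fun k _ =>
          add_le_add ((hentry j k).2.2.trans_eq (hA.apply i k)) (hentry k j).2.1) ?_
        exact sum_le_sum_of_subset_of_nonneg hsub fun k _ _ =>
          add_nonneg (hA01 i k).1 (hA01 i k).1
    _ = _ := by rw [symmDiff_comm, sum_const, sum_add_distrib, nsmul_eq_mul]; ring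
end
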